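/- arXiv:2204.00344 — 3 statements merged into one kernel-verified Lean document; each statement's English description precedes it below -/
import Mathlib

section
/- The function q(r) = (1 - r²) - r(1 + e^r) is strictly decreasing on [0,1], satisfies q(0) = 1 > 0 and q(1) = -(1 + e) < 0, and hence has a unique root in (0,1). -/
theorem unique_root_sigmoid (q : ℝ → ℝ)
    (hq : q = fun r => (1 - r^2) - r*(1 + Real.exp r)) :
    StrictAntiOn q (Set.Icc (0:ℝ) 1) ∧ q 0 = 1 ∧ q 1 = -(1 + Real.exp 1) ∧
    ∃! r, r ∈ Set.Ioo (0:ℝ) 1 ∧ q r = 0 := by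
  subst hq
  have hanti : StrictAntiOn (fun r : ℝ => (1 - r^2) - r*(1 + Real.exp r))
      (Set.Icc (0:ℝ) 1) := by
    intro a ha b hb hab
    simp only
    have hea : Real.exp a < Real.exp b := Real.exp_lt_exp.mpr hab
    have h0a : (0:ℝ) < Real.exp a := Real.exp_pos a
    obtain ⟨ha0, _⟩ := ha
    nlinarith [Real.exp_pos b]
  refine ⟨hanti, by norm_num, by ring, ?_⟩
  have hq0 : (fun r : ℝ => (1 - r^2) - r*(1 + Real.exp r)) 0 = 1 := by norm_num
  have hq1 : (fun r : ℝ => (1 - r^2) - r*(1 + Real.exp r)) 1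
      = -(1 + Real.exp 1) := by ring
  have hcont : ContinuousOn (fun r : ℝ => (1 - r^2) - r*(1 + Real.exp r))
      (Set.Icc (0:ℝ) 1) := by fun_prop
  have hsub := intermediate_value_Ioo' (by norm_num : (0:ℝ) ≤ 1) hcont
  have h0mem : (0:ℝ) ∈ Set.Ioo ((fun r : ℝ => (1 - r^2) - r*(1 + Real.exp r)) 1)
      ((fun r : ℝ => (1 - r^2) - r*(1 + Real.exp r)) 0) := by
    rw [hq0, hq1]
    constructor
    · have := Real.exp_pos 1; linarith
    · norm_num
  obtain ⟨r, hr, hr0⟩ := hsub h0mem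
  refine ⟨r, ⟨hr, hr0⟩, ?_⟩
  rintro s ⟨hs, hs0⟩
  have hrI : r ∈ Set.Icc (0:ℝ) 1 := Set.mem_Icc_of_Ioo hr
  have hsI : s ∈ Set.Icc (0:ℝ) 1 := Set.mem_Icc_of_Ioo hs
  by_contra hne
  rcases lt_or_gt_of_ne hne with h | h
  · have := hanti hsI hrI h; rw [hr0, hs0] at this; exact lt_irrefl _ this
  · have := hanti hrI hsI h; rw [hr0, hs0] at this; exact lt_irrefl _ this
end

section
/- The function q(r) = (1 - r²)(1 - sin r) - 2r is strictly decreasing on [0,1], with q(0) = 1 > 0 and q(1) = -2 < 0, hence has a unique root in (0,1). -/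
/-!
On `[0, 1]` both `1 - r²` and `1 - sin r` are nonnegative and decreasing, so their product is
decreasing and subtracting `2r` makes `q` strictly decreasing. Since `q` changes sign between the
endpoints, the intermediate value theorem gives a root, and strict monotonicity makes it unique.
-/

open Real Set

theorem StrictAntiOn.existsUnique_mem_Ioo_eq {α δ : Type*} [ConditionallyCompleteLinearOrder α]
    [TopologicalSpace α] [OrderTopology α] [DenselyOrdered α] [LinearOrder δ] [TopologicalSpace δ]
    [OrderClosedTopology δ] {f : α → δ} {a b : α} {c : δ} (hab : a ≤ b)
    (hf : ContinuousOn f (Icc a b)) (hanti : StrictAntiOn f (Icc a b)) (ha : c < f a)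
    (hb : f b < c) : ∃! r, r ∈ Ioo a b ∧ f r = c := by
  obtain ⟨r, hr, hr0⟩ := intermediate_value_Ioo' hab hf ⟨hb, ha⟩
  refine ⟨r, ⟨hr, hr0⟩, fun s ⟨hs, hs0⟩ => ?_⟩
  exact hanti.injOn (Ioo_subset_Icc_self hs) (Ioo_subset_Icc_self hr) (hs0.trans hr0.symm)

theorem antitoneOn_one_sub_sin_Icc_zero_one : AntitoneOn (fun r => 1 - sin r) (Icc 0 1) := by
  intro x hx y hy hxy
  exact sub_le_sub_left (sin_le_sin_of_le_of_le_pi_div_two (by linarith [hx.1, pi_pos])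
    (by linarith [hy.2, pi_gt_three]) hxy) 1

theorem antitoneOn_one_sub_sq_Icc_zero_one : AntitoneOn (fun r : ℝ => 1 - r ^ 2) (Icc 0 1) :=
  fun _ hx _ _ hxy => sub_le_sub_left (pow_le_pow_left₀ hx.1 hxy 2) 1

theorem strictAntiOn_sine_radius_function :
    StrictAntiOn (fun r => (1 - r ^ 2) * (1 - sin r) - 2 * r) (Icc 0 1) := by
  have hprod : AntitoneOn (fun r => (1 - r ^ 2) * (1 - sin r)) (Icc 0 1) := by
    intro x hx y hy hxy
    exact mul_le_mul (antitoneOn_one_sub_sq_Icc_zero_one hx hy hxy)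
      (antitoneOn_one_sub_sin_Icc_zero_one hx hy hxy) (sub_nonneg.2 (sin_le_one y))
      (by nlinarith [hx.1, hx.2])
  simpa only [sub_eq_add_neg] using
    hprod.add_strictAnti fun x _ y _ hxy => neg_lt_neg (by linarith : 2 * x < 2 * y)

theorem unique_root_sine (q : ℝ → ℝ)
    (hq : q = fun r => (1 - r^2) * (1 - Real.sin r) - 2*r) :
    StrictAntiOn q (Set.Icc (0:ℝ) 1) ∧ q 0 = 1 ∧ q 1 = -2 ∧
    ∃! r, r ∈ Set.Ioo (0:ℝ) 1 ∧ q r = 0 := by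
  subst hq
  have hq0 : (1 - (0 : ℝ) ^ 2) * (1 - sin 0) - 2 * 0 = 1 := by simp
  have hq1 : (1 - (1 : ℝ) ^ 2) * (1 - sin 1) - 2 * 1 = -2 := by norm_num
  refine ⟨strictAntiOn_sine_radius_function, hq0, hq1, ?_⟩
  exact strictAntiOn_sine_radius_function.existsUnique_mem_Ioo_eq zero_le_one
    (by fun_prop) (by rw [hq0]; norm_num) (by rw [hq1]; norm_num)
end

section
/- For real r ∈ (0,1) and δ ∈ [-1,1], define K(δ, r) = (r + δ)/(1 + δr) + ((1 - δ²)/(1 + δr)²)·c where c > (1 - r²)/2 is a positive constant. Then K(1, r) = 1 and ∂K/∂δ evaluated at δ = 1 equals (2/(1+r)²)·((1 - r²)/2 - c) < 0; consequently K(1 - ε, r) > 1 for all sufficiently small ε > 0. -/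
/-!
At `δ = 1` the weight `1 - δ²` vanishes, so `K 1 = 1`, while differentiating gives
`K'(1) = ((1 - r²) - 2c)/(1 + r)²`, negative once `c > (1 - r²)/2`. A negative derivative at `1`
forces `K` above its value `1` just to the left of `1`.
-/

open Filter Topology

theorem HasDerivAt.eventually_lt_of_pos {f : ℝ → ℝ} {f' x : ℝ} (hf : HasDerivAt f f' x)
    (hf' : 0 < f') : ∀ᶠ y in 𝓝[>] x, f x < f y := by
  have hslope := (hasDerivAt_iff_tendsto_slope.mp hf).eventually (eventually_gt_nhds hf')
  filter_upwards [nhdsGT_le_nhdsNE x hslope, self_mem_nhdsWithin] with y hy (hxy : x < y)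
  exact (slope_pos_iff hxy).mp hy

theorem HasDerivAt.eventually_lt_sub_of_neg {f : ℝ → ℝ} {f' x : ℝ} (hf : HasDerivAt f f' x)
    (hf' : f' < 0) : ∀ᶠ ε in 𝓝[>] 0, f x < f (x - ε) := by
  simpa using (HasDerivAt.comp_const_sub x 0 (by simpa using hf)).eventually_lt_of_pos
    (neg_pos.mpr hf')

theorem hasDerivAt_mobius (r x : ℝ) (hx : 1 + x * r ≠ 0) :
    HasDerivAt (fun δ => (r + δ) / (1 + δ * r)) ((1 - r ^ 2) / (1 + x * r) ^ 2) x :=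
  (((hasDerivAt_id' x).const_add r).div
    (((hasDerivAt_id' x).mul_const r).const_add 1) hx).congr_deriv (by ring)

theorem hasDerivAt_one_sub_sq_div_sq (r x : ℝ) (hx : 1 + x * r ≠ 0) :
    HasDerivAt (fun δ => (1 - δ ^ 2) / (1 + δ * r) ^ 2) (-2 * (x + r) / (1 + x * r) ^ 3) x := by
  refine (((hasDerivAt_pow 2 x).const_sub 1).div
    ((((hasDerivAt_id' x).mul_const r).const_add 1).pow 2) (pow_ne_zero 2 hx)).congr_deriv ?_
  simp only [Pi.pow_apply]
  field_simp
  ring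

theorem hasDerivAt_mobius_add_one_sub_sq_div_sq_mul (r c x : ℝ) (hx : 1 + x * r ≠ 0) :
    HasDerivAt (fun δ => (r + δ) / (1 + δ * r) + ((1 - δ ^ 2) / (1 + δ * r) ^ 2) * c)
      (((1 - r ^ 2) * (1 + x * r) - 2 * c * (x + r)) / (1 + x * r) ^ 3) x := by
  refine ((hasDerivAt_mobius r x hx).add
    ((hasDerivAt_one_sub_sq_div_sq r x hx).mul_const c)).congr_deriv ?_
  field_simp
  ring

theorem sharpness_K (r c : ℝ) (hr : r ∈ Set.Ioo (0:ℝ) 1)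
    (hc : (1 - r^2)/2 < c)
    (K : ℝ → ℝ)
    (hK : K = fun δ => (r + δ)/(1 + δ*r) + ((1 - δ^2)/(1 + δ*r)^2) * c) :
    K 1 = 1 ∧
    deriv K 1 = (2/(1 + r)^2) * ((1 - r^2)/2 - c) ∧
    deriv K 1 < 0 ∧
    ∀ᶠ ε in nhdsWithin 0 (Set.Ioi (0:ℝ)), K (1 - ε) > 1 := by
  subst hK
  obtain ⟨hr0, -⟩ := hr
  have hr1 : 1 + r ≠ 0 := by positivity
  have hK1 : (r + 1) / (1 + 1 * r) + ((1 - 1 ^ 2) / (1 + 1 * r) ^ 2) * c = 1 := by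
    simp [add_comm r, hr1]
  have hderiv := hasDerivAt_mobius_add_one_sub_sq_div_sq_mul r c 1 (by rwa [one_mul])
  have hvalue : ((1 - r ^ 2) * (1 + 1 * r) - 2 * c * (1 + r)) / (1 + 1 * r) ^ 3
      = 2 / (1 + r) ^ 2 * ((1 - r ^ 2) / 2 - c) := by
    field_simp
  have hneg : 2 / (1 + r) ^ 2 * ((1 - r ^ 2) / 2 - c) < 0 :=
    mul_neg_of_pos_of_neg (by positivity) (by linarith)
  rw [hvalue] at hderiv
  refine ⟨hK1, hderiv.deriv, hderiv.deriv ▸ hneg, ?_⟩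
  simpa only [hK1] using hderiv.eventually_lt_sub_of_neg hneg
end
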